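/- arXiv:1911.06735 — 3 statements merged into one kernel-verified Lean document; each statement's English description precedes it below -/
import Mathlib

section
/- Let p be an odd prime and λ a self-conjugate partition. If a*_λ, the number of nodes in the p-rim* of λ, is an even number, then p divides a*_λ. -/
namespace Mull

/-- A partition of a natural number, encoded as the (0-indexed) weakly decreasing,
eventually-zero sequence of its row lengths.  The Young diagram of `f` is the set
of (0-indexed) nodes `(i, j)` with `j < f i`. -/
def IsPartition (f : ℕ → ℕ) : Prop :=
  Antitone f ∧ ∃ N, f N = 0

/-- The number of nonzero rows of `f`. -/
noncomputable def len (f : ℕ → ℕ) : ℕ :=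
  sInf {N | f N = 0}

/-- The size (number of nodes) of `f`. -/
noncomputable def size (f : ℕ → ℕ) : ℕ :=
  ∑ i ∈ Finset.range (len f), f i

/-- The conjugate (transpose) partition: `conj f j` is the number of rows `i`
with `f i > j`, i.e. the length of the `j`-th column. -/
noncomputable def conj (f : ℕ → ℕ) : ℕ → ℕ :=
  fun j => Nat.card {i | j < f i}

/-- A partition is self-conjugate if it equals its conjugate. -/
def SelfConj (f : ℕ → ℕ) : Prop :=
  conj f = f

/-- The hook length of `f` at the (0-indexed) node `(i, j)`:
in 1-indexed terms this is `λ_i + λ'_j - i - j + 1`. -/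
noncomputable def hook (f : ℕ → ℕ) (i j : ℕ) : ℕ :=
  f i + conj f j - i - j - 1

/-- A BG-partition: a self-conjugate partition none of whose diagonal hook lengths
is divisible by `p`. -/
def IsBG (p : ℕ) (f : ℕ → ℕ) : Prop :=
  IsPartition f ∧ SelfConj f ∧ ∀ i, i < f i → ¬ p ∣ hook f i i

/-- A partition is `p`-regular if it does not have `p` equal nonzero parts. -/
def IsRegular (p : ℕ) (f : ℕ → ℕ) : Prop :=
  ∀ i, f (i + (p - 1)) ≠ 0 → f i ≠ f (i + (p - 1))

/-- The list of nodes of the rim of `f` (nodes `(i, j)` of the diagram such that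
`(i+1, j+1)` is not in the diagram), listed from the top right to the bottom left. -/
noncomputable def rimList (f : ℕ → ℕ) : List (ℕ × ℕ) :=
  (List.range (len f)).flatMap fun i =>
    (List.range (f i - (f (i + 1) - 1))).map fun k => (i, f i - 1 - k)

/-- Auxiliary selection of the `p`-rim from the ordered list of rim nodes (with fuel):
take the next `p`-segment (the next `p` rim nodes), then, if the last selected node is
not in the bottom row, skip the remaining rim nodes lying in the row of the last
selected node and continue from the next row. -/
def pRimAux (p : ℕ) : ℕ → List (ℕ × ℕ) → List (ℕ × ℕ)
  | 0, _ => []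
  | _ + 1, [] => []
  | fuel + 1, c :: L =>
    (c :: L).take p ++
      pRimAux p fuel (((c :: L).drop p).filter
        fun d => (((c :: L).take p).getLastD c).1 < d.1)

/-- The list of nodes of the `p`-rim of `f`, from the top right to the bottom left. -/
noncomputable def pRimList (p : ℕ) (f : ℕ → ℕ) : List (ℕ × ℕ) :=
  pRimAux p (rimList f).length (rimList f)

/-- `f` minus its `p`-rim. -/
noncomputable def removeRim (p : ℕ) (f : ℕ → ℕ) : ℕ → ℕ :=
  fun i => f i - ((pRimList p f).filter fun c => c.1 = i).length

/-- The number of columns of the Mullineux symbol of `f` (i.e. `l + 1`), namely the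
number of times the `p`-rim must be removed to reach the empty partition. -/
noncomputable def steps (p : ℕ) (f : ℕ → ℕ) : ℕ :=
  sInf {k | len ((removeRim p)^[k] f) = 0}

/-- `a_i`: the number of nodes of the `p`-rim of `λ^(i)`. -/
noncomputable def aSeq (p : ℕ) (f : ℕ → ℕ) (i : ℕ) : ℕ :=
  (pRimList p ((removeRim p)^[i] f)).length

/-- `r_i`: the number of nonzero rows of `λ^(i)`. -/
noncomputable def rSeq (p : ℕ) (f : ℕ → ℕ) (i : ℕ) : ℕ :=
  len ((removeRim p)^[i] f)

/-- `ε_i`: `0` if `p ∣ a_i` and `1` otherwise. -/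
noncomputable def epsSeq (p : ℕ) (f : ℕ → ℕ) (i : ℕ) : ℕ :=
  if p ∣ aSeq p f i then 0 else 1

/-- The Mullineux symbol of `f`, recorded as the list of its columns
`(a_i, r_i)` for `0 ≤ i ≤ l`. -/
noncomputable def GSymb (p : ℕ) (f : ℕ → ℕ) : List (ℕ × ℕ) :=
  (List.range (steps p f)).map fun i => (aSeq p f i, rSeq p f i)

/-- The effect of the Mullineux map on one column of the Mullineux symbol:
`(a_i, r_i) ↦ (a_i, s_i)` where `s_i = a_i + ε_i - r_i`. -/
def mullCol (p : ℕ) (c : ℕ × ℕ) : ℕ × ℕ :=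
  (c.1, c.1 + (if p ∣ c.1 then 0 else 1) - c.2)

/-- `f` is a self-Mullineux partition: a `p`-regular partition fixed by the Mullineux
map, i.e. every column of its Mullineux symbol is fixed by `mullCol`. -/
def SelfMull (p : ℕ) (f : ℕ → ℕ) : Prop :=
  IsPartition f ∧ IsRegular p f ∧ (GSymb p f).map (mullCol p) = GSymb p f

/-- `U_λ`: the nodes of the `p`-rim lying on or above the diagonal. -/
noncomputable def UList (p : ℕ) (f : ℕ → ℕ) : List (ℕ × ℕ) :=
  (pRimList p f).filter fun c => c.1 ≤ c.2

/-- The `p`-rim* of a self-conjugate partition: `U_λ ∪ L_λ`, where `L_λ` is the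
reflection of `U_λ` across the diagonal. -/
noncomputable def rimStar (p : ℕ) (f : ℕ → ℕ) : Finset (ℕ × ℕ) :=
  (UList p f).toFinset ∪ (UList p f).toFinset.image fun c => (c.2, c.1)

/-- `a*`: the number of nodes of the `p`-rim*. -/
noncomputable def aStar (p : ℕ) (f : ℕ → ℕ) : ℕ :=
  (rimStar p f).card

/-- `r*`: the number of nodes of `U_λ`. -/
noncomputable def rStar (p : ℕ) (f : ℕ → ℕ) : ℕ :=
  (UList p f).toFinset.card

/-- `ε* = a* mod 2`. -/
noncomputable def epsStar (p : ℕ) (f : ℕ → ℕ) : ℕ :=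
  aStar p f % 2

/-- `λ^(1)*`: `f` minus its `p`-rim*. -/
noncomputable def removeRimStar (p : ℕ) (f : ℕ → ℕ) : ℕ → ℕ :=
  fun i => f i - ((rimStar p f).filter fun c => c.1 = i).card

/-- The number of columns of the BG-symbol of `f`. -/
noncomputable def stepsStar (p : ℕ) (f : ℕ → ℕ) : ℕ :=
  sInf {k | len ((removeRimStar p)^[k] f) = 0}

/-- The BG-symbol of a self-conjugate partition, recorded as the list of its columns
`(a*_i, r*_i)` for `0 ≤ i ≤ l`. -/
noncomputable def BGSymb (p : ℕ) (f : ℕ → ℕ) : List (ℕ × ℕ) :=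
  (List.range (stepsStar p f)).map fun i =>
    (aStar p ((removeRimStar p)^[i] f), rStar p ((removeRimStar p)^[i] f))

/-- The number of diagonal nodes of `f`, i.e. `max {i : λ_i ≥ i}` in 1-indexed terms. -/
noncomputable def kDiag (f : ℕ → ℕ) : ℕ :=
  Nat.card {i | i < f i}

/-- The sequence of diagonal hook lengths of `f` (padded with zeros). -/
noncomputable def diagHooks (f : ℕ → ℕ) : ℕ → ℕ :=
  fun i => if i < f i then hook f i i else 0


/-! ### Infrastructure for the parity lemma -/

section ParityProof

open List

/-- Strict "reading order" on nodes: earlier rows first; within a row, larger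
columns first. -/
def plt (a b : ℕ × ℕ) : Prop := a.1 < b.1 ∨ (a.1 = b.1 ∧ b.2 < a.2)

lemma plt_asymm {a b : ℕ × ℕ} (h1 : plt a b) (h2 : plt b a) : False := by
  rcases h1 with h | ⟨h, h'⟩ <;> rcases h2 with g | ⟨g, g'⟩ <;> omega

variable {f : ℕ → ℕ}

lemma f_len_eq_zero (hf : ∃ N, f N = 0) : f (len f) = 0 :=
  Nat.sInf_mem hf

lemma lt_len_iff (hmono : Antitone f) (hf : ∃ N, f N = 0) {i : ℕ} :
    i < len f ↔ 0 < f i := by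
  constructor
  · intro h
    by_contra hc
    have h0 : f i = 0 := by omega
    have : len f ≤ i := Nat.sInf_le h0
    omega
  · intro h
    by_contra hc
    have : f i ≤ f (len f) := hmono (by omega)
    rw [f_len_eq_zero hf] at this
    omega

lemma mem_rimList (hmono : Antitone f) (hf : ∃ N, f N = 0) {x : ℕ × ℕ} :
    x ∈ rimList f ↔ x.1 < len f ∧ f (x.1 + 1) - 1 ≤ x.2 ∧ x.2 < f x.1 := by
  simp only [rimList, List.mem_flatMap, List.mem_range, List.mem_map]
  constructor
  · rintro ⟨i, hi, k, hk, rfl⟩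
    have hm : f (i + 1) ≤ f i := hmono (by omega)
    dsimp only
    exact ⟨hi, by omega, by omega⟩
  · rintro ⟨h1, h2, h3⟩
    refine ⟨x.1, h1, f x.1 - 1 - x.2, ?_, ?_⟩
    · have hm := hmono (Nat.le_succ x.1)
      omega
    · have hx : f x.1 - 1 - (f x.1 - 1 - x.2) = x.2 := by omega
      rw [hx]

lemma pairwise_rimList (hmono : Antitone f) : (rimList f).Pairwise plt := by
  unfold rimList
  rw [List.pairwise_flatMap]
  constructor
  · intro i _
    rw [List.pairwise_map]
    refine List.Pairwise.imp_of_mem ?_ List.pairwise_lt_range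
    intro k k' hk hk' hkk'
    simp only [List.mem_range] at hk hk'
    right
    exact ⟨rfl, by omega⟩
  · refine List.Pairwise.imp ?_ List.pairwise_lt_range
    intro i i' hii' a ha b hb
    simp only [List.mem_map, List.mem_range] at ha hb
    obtain ⟨k, _, rfl⟩ := ha
    obtain ⟨k', _, rfl⟩ := hb
    left
    exact hii'

/-- head property: the head of the list (if any) is the first rim node of its row. -/
def HeadInit (f : ℕ → ℕ) (L : List (ℕ × ℕ)) : Prop :=
  ∀ x, L.head? = some x → x.2 = f x.1 - 1

lemma headInit_nil : HeadInit f [] := by intro x h; simp at h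

/-- In a `plt`-pairwise list, every element equals the head or is `plt`-after it. -/
lemma head_min {L : List (ℕ × ℕ)} (hL : L.Pairwise plt) {x h : ℕ × ℕ}
    (hh : L.head? = some h) (hx : x ∈ L) : x = h ∨ plt h x := by
  cases L with
  | nil => simp at hh
  | cons a T =>
    simp only [List.head?_cons, Option.some.injEq] at hh
    subst hh
    rcases hx with _ | hx
    · exact Or.inl rfl
    · exact Or.inr ((List.pairwise_cons.mp hL).1 x (by assumption))

/-- In a `plt`-pairwise list, every element equals the last or is `plt`-before it. -/
lemma last_max {L : List (ℕ × ℕ)} (hL : L.Pairwise plt) {x y : ℕ × ℕ}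
    (hy : L.getLast? = some y) (hx : x ∈ L) : x = y ∨ plt x y := by
  induction L with
  | nil => simp at hx
  | cons a T ih =>
    cases T with
    | nil =>
      simp only [List.getLast?_singleton, Option.some.injEq] at hy
      simp only [List.mem_singleton] at hx
      left; rw [hx, hy]
    | cons b T' =>
      rw [List.getLast?_cons_cons] at hy
      rcases List.mem_cons.mp hx with rfl | hx
      · right
        have hymem : y ∈ b :: T' := by
          obtain ⟨h', rfl⟩ := List.mem_getLast?_eq_getLast hy
          exact List.getLast_mem h'
        exact (List.pairwise_cons.mp hL).1 y hymem
      · exact ih (List.pairwise_cons.mp hL).2 hy hx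

/-- Elements of a suffix that are `plt`-at-or-after the head of the suffix. -/
lemma mem_suffix_of_head {M L : List (ℕ × ℕ)} (hM : M.Pairwise plt)
    (hL : L <:+ M) {h z : ℕ × ℕ} (hh : L.head? = some h) (hz : z ∈ M)
    (hzh : z = h ∨ plt h z) : z ∈ L := by
  obtain ⟨pre, rfl⟩ := hL
  rcases List.mem_append.mp hz with h1 | h2
  · exfalso
    have hhd : h ∈ L := List.mem_of_mem_head? hh
    have := (List.pairwise_append.mp hM).2.2 z h1 h hhd
    rcases hzh with rfl | hzh
    · exact plt_asymm this this
    · exact plt_asymm this hzh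
  · exact h2

/-- If `y` is in `take n L` and `x ∈ L` comes `plt`-before `y`, then `x ∈ take n L`. -/
lemma mem_take_of_plt {L : List (ℕ × ℕ)} (hL : L.Pairwise plt) {n : ℕ}
    {x y : ℕ × ℕ} (hx : x ∈ L) (hy : y ∈ L.take n) (hxy : x = y ∨ plt x y) :
    x ∈ L.take n := by
  have hsplit : L.take n ++ L.drop n = L := List.take_append_drop n L
  rcases (by rw [← hsplit] at hx; exact List.mem_append.mp hx) with h1 | h2
  · exact h1
  · exfalso
    have := (List.pairwise_append.mp (by rw [hsplit]; exact hL)).2.2 y hy x h2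
    rcases hxy with rfl | hxy
    · exact plt_asymm this this
    · exact plt_asymm hxy this

/-- `plt`-pairwise lists have no duplicates. -/
lemma pairwise_nodup {L : List (ℕ × ℕ)} (hL : L.Pairwise plt) : L.Nodup :=
  hL.imp (fun h => by rintro rfl; exact plt_asymm h h)

lemma pRimAux_nil (p : ℕ) (fuel : ℕ) : pRimAux p fuel [] = [] := by
  cases fuel <;> rfl

lemma pRimAux_sublist (p : ℕ) : ∀ (fuel : ℕ) (L : List (ℕ × ℕ)),
    pRimAux p fuel L <+ L := by
  intro fuel
  induction fuel with
  | zero => intro L; simp [pRimAux]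
  | succ fuel ih =>
    intro L
    cases L with
    | nil => simp [pRimAux]
    | cons c T =>
      show ((c :: T).take p ++ _) <+ (c :: T)
      have s1 := (ih (((c :: T).drop p).filter
          fun d => (((c :: T).take p).getLastD c).1 < d.1)).append_left ((c :: T).take p)
      have s2 := ((List.filter_sublist (l := (c :: T).drop p)
          (p := fun d => decide ((((c :: T).take p).getLastD c).1 < d.1))).append_left
          ((c :: T).take p))
      have s3 := s1.trans s2
      rw [List.take_append_drop] at s3
      exact s3

/-- The "next list" in the `pRimAux` recursion. -/
def nxt (p : ℕ) (L : List (ℕ × ℕ)) : List (ℕ × ℕ) :=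
  (L.drop p).filter fun d => ((L.take p).getLastD (0, 0)).1 < d.1

lemma pRimAux_cons (p fuel : ℕ) (hp : 1 ≤ p) (c : ℕ × ℕ) (T : List (ℕ × ℕ)) :
    pRimAux p (fuel + 1) (c :: T) = (c :: T).take p ++ pRimAux p fuel (nxt p (c :: T)) := by
  show (c :: T).take p ++ _ = _
  congr 2
  unfold nxt
  congr 1
  funext d
  congr 2
  obtain ⟨q, rfl⟩ : ∃ q, p = q + 1 := ⟨p - 1, by omega⟩
  obtain ⟨a, ha⟩ : ∃ a, (c :: List.take q T).getLast? = some a :=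
    ⟨_, List.getLast?_eq_getLast_of_ne_nil (by simp)⟩
  simp [ha]


lemma mem_takeWhile_pred {P : ℕ × ℕ → Bool} :
    ∀ {l : List (ℕ × ℕ)} {x : ℕ × ℕ}, x ∈ l.takeWhile P → P x := by
  intro l
  induction l with
  | nil => intro x hx; simp at hx
  | cons a T ih =>
    intro x hx
    by_cases h : P a
    · rw [List.takeWhile_cons_of_pos h] at hx
      rcases List.mem_cons.mp hx with rfl | hx
      · exact h
      · exact ih hx
    · rw [List.takeWhile_cons_of_neg h] at hx
      simp at hx

lemma getLastD_mem {L : List (ℕ × ℕ)} (hne : L ≠ []) : L.getLastD (0, 0) ∈ L := by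
  obtain ⟨a, ha⟩ : ∃ a, L.getLast? = some a := ⟨_, List.getLast?_eq_getLast_of_ne_nil hne⟩
  have h2 : L.getLastD (0, 0) = a := by simp [ha]
  rw [h2]
  obtain ⟨h', rfl⟩ := List.mem_getLast?_eq_getLast ha
  exact List.getLast_mem h'

lemma rows_le_last {L : List (ℕ × ℕ)} (hL : L.Pairwise plt) {x : ℕ × ℕ}
    (hx : x ∈ L) : x.1 ≤ (L.getLastD (0, 0)).1 := by
  have hne : L ≠ [] := List.ne_nil_of_mem hx
  obtain ⟨a, ha⟩ : ∃ a, L.getLast? = some a := ⟨_, List.getLast?_eq_getLast_of_ne_nil hne⟩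
  have h2 : L.getLastD (0, 0) = a := by simp [ha]
  rw [h2]
  rcases last_max hL ha hx with rfl | hplt
  · exact le_refl _
  · rcases hplt with h | ⟨h, _⟩ <;> omega

lemma head?_take {L : List (ℕ × ℕ)} {p : ℕ} (hp : 1 ≤ p) :
    (L.take p).head? = L.head? := by
  cases L with
  | nil => simp
  | cons c T =>
    obtain ⟨q, rfl⟩ : ∃ q, p = q + 1 := ⟨p - 1, by omega⟩
    simp [List.take_succ_cons]

lemma filter_gt_suffix (r : ℕ) : ∀ {T : List (ℕ × ℕ)}, T.Pairwise plt →
    (T.filter fun d => decide (r < d.1)) <:+ T := by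
  intro T
  induction T with
  | nil => intro _; simp
  | cons a T ih =>
    intro hT
    by_cases h : r < a.1
    · have : (a :: T).filter (fun d => decide (r < d.1)) = a :: T := by
        rw [List.filter_eq_self]
        intro b hb
        rcases List.mem_cons.mp hb with rfl | hb
        · simpa using h
        · have := (List.pairwise_cons.mp hT).1 b hb
          rcases this with h' | ⟨h', _⟩ <;> simp <;> omega
      rw [this]
    · have : (a :: T).filter (fun d => decide (r < d.1)) = T.filter (fun d => decide (r < d.1)) := by
        simp [List.filter_cons, h]
      rw [this]
      exact (ih (List.pairwise_cons.mp hT).2).trans (List.suffix_cons a T)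

lemma takeWhile_filter_rows (D : ℕ) : ∀ {l : List (ℕ × ℕ)}, l.Pairwise plt →
    l.filter (fun x => decide (x.1 ≤ D)) = l.takeWhile (fun x => decide (x.1 ≤ D)) := by
  intro l
  induction l with
  | nil => intro _; simp
  | cons a T ih =>
    intro hl
    by_cases h : a.1 ≤ D
    · rw [List.takeWhile_cons_of_pos (by simpa using h)]
      rw [List.filter_cons_of_pos (by simpa using h)]
      rw [ih (List.pairwise_cons.mp hl).2]
    · rw [List.takeWhile_cons_of_neg (by simpa using h)]
      rw [List.filter_cons_of_neg (by simpa using h)]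
      rw [List.filter_eq_nil_iff]
      intro b hb
      have := (List.pairwise_cons.mp hl).1 b hb
      rcases this with h' | ⟨h', _⟩ <;> simp <;> omega

lemma not_between {M : List (ℕ × ℕ)} (hM : M.Pairwise plt) {x y : ℕ × ℕ}
    (hadj : ∃ A B, M = A ++ x :: y :: B) {z : ℕ × ℕ} (hz : z ∈ M)
    (h1 : plt x z) (h2 : plt z y) : False := by
  obtain ⟨A, B, rfl⟩ := hadj
  have hsplit := List.pairwise_append.mp hM
  rcases List.mem_append.mp hz with hA | hR
  · exact plt_asymm h1 (hsplit.2.2 z hA x (by simp))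
  · rcases List.mem_cons.mp hR with rfl | hR
    · exact plt_asymm h1 h1
    · rcases List.mem_cons.mp hR with rfl | hR
      · exact plt_asymm h2 h2
      · have hxy := List.pairwise_cons.mp hsplit.2.1
        have hyB := List.pairwise_cons.mp hxy.2
        exact plt_asymm h2 (hyB.1 z hR)

/-- A "good" list for the `pRimAux` recursion. -/
structure Good (f : ℕ → ℕ) (L : List (ℕ × ℕ)) : Prop where
  suff : L <:+ rimList f
  hi : HeadInit f L

lemma nxt_length_le {p : ℕ} {L : List (ℕ × ℕ)} : (nxt p L).length ≤ L.length - p := by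
  calc (nxt p L).length ≤ (L.drop p).length := List.filter_sublist.length_le
    _ = L.length - p := List.length_drop

lemma nxt_rows {p : ℕ} {x : ℕ × ℕ} {L : List (ℕ × ℕ)} (hx : x ∈ nxt p L) :
    ((L.take p).getLastD (0, 0)).1 < x.1 := by
  have := (List.mem_filter.mp hx).2
  simpa using this

lemma pairwise_of_suffix {L : List (ℕ × ℕ)} (hmono : Antitone f)
    (h : L <:+ rimList f) : L.Pairwise plt :=
  List.Pairwise.sublist h.sublist (pairwise_rimList hmono)

section Ctx

set_option linter.unusedSectionVars false

variable {p D : ℕ} (hmono : Antitone f) (hfin : ∃ N, f N = 0)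
  (hD : D < f D) (hDmax : ∀ m, D < m → f m ≤ m) (hp : 1 ≤ p)

include hmono hfin hD hDmax hp

lemma diag_lt_of_le {i : ℕ} (hi : i ≤ D) : i < f i := by
  have := hmono hi
  omega

lemma D_lt_len : D < len f := (lt_len_iff hmono hfin).mpr (by omega)

lemma mem_rim_of (i j : ℕ) (h1 : i < len f) (h2 : f (i + 1) - 1 ≤ j) (h3 : j < f i) :
    (i, j) ∈ rimList f := (mem_rimList hmono hfin).mpr ⟨h1, h2, h3⟩

lemma diag_mem_rim : (D, D) ∈ rimList f := by
  refine mem_rim_of hmono hfin hD hDmax hp D D (D_lt_len hmono hfin hD hDmax hp) ?_ hD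
  have := hDmax (D + 1) (by omega)
  omega

lemma good_pairwise {L : List (ℕ × ℕ)} (hG : Good f L) : L.Pairwise plt :=
  pairwise_of_suffix hmono hG.suff

lemma mem_M_of_mem {L : List (ℕ × ℕ)} (hG : Good f L) {x : ℕ × ℕ} (hx : x ∈ L) :
    x ∈ rimList f := hG.suff.sublist.subset hx

/-- A node of the full rim which is at-or-after the head of a good list belongs to it. -/
lemma mem_good {L : List (ℕ × ℕ)} (hG : Good f L) {h z : ℕ × ℕ}
    (hh : L.head? = some h) (hz : z ∈ rimList f) (hzh : z = h ∨ plt h z) : z ∈ L :=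
  mem_suffix_of_head (pairwise_rimList hmono) hG.suff hh hz hzh

/-- The next list in the recursion is good. -/
lemma nxt_good {L : List (ℕ × ℕ)} (hG : Good f L) : Good f (nxt p L) := by
  have hM := pairwise_rimList (f := f) hmono
  have hL : L.Pairwise plt := good_pairwise hmono hfin hD hDmax hp hG
  have hdropP : (L.drop p).Pairwise plt :=
    List.Pairwise.sublist (List.drop_suffix p L).sublist hL
  have hNsuff : (nxt p L) <:+ rimList f :=
    ((filter_gt_suffix _ hdropP).trans (List.drop_suffix p L)).trans hG.suff
  refine ⟨hNsuff, ?_⟩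
  intro x hx
  have hxN : x ∈ nxt p L := List.mem_of_mem_head? hx
  have hxdrop : x ∈ L.drop p := (List.mem_filter.mp hxN).1
  have hxrow : ((L.take p).getLastD (0, 0)).1 < x.1 :=
    of_decide_eq_true (List.mem_filter.mp hxN).2
  have hxL : x ∈ L := (List.drop_suffix p L).sublist.subset hxdrop
  have hxM : x ∈ rimList f := mem_M_of_mem hmono hfin hD hDmax hp hG hxL
  have hxc := (mem_rimList hmono hfin).mp hxM
  by_contra hne
  have hx2 : x.2 + 1 < f x.1 := by omega
  have hzM : (x.1, x.2 + 1) ∈ rimList f :=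
    mem_rim_of hmono hfin hD hDmax hp x.1 (x.2 + 1) hxc.1 (by omega) hx2
  have hLne : L ≠ [] := by
    rintro rfl
    simp [nxt] at hxN
  obtain ⟨h0, hh0⟩ : ∃ h0, L.head? = some h0 := ⟨L.head hLne, List.head?_eq_head hLne⟩
  have hh0take : (L.take p).head? = some h0 := by rw [head?_take hp]; exact hh0
  have htakeP : (L.take p).Pairwise plt :=
    List.Pairwise.sublist (List.take_sublist p L) hL
  have hh0r : h0.1 ≤ ((L.take p).getLastD (0, 0)).1 :=
    rows_le_last htakeP (List.mem_of_mem_head? hh0take)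
  have hzL : (x.1, x.2 + 1) ∈ L := by
    refine mem_good hmono hfin hD hDmax hp hG hh0 hzM (Or.inr (Or.inl ?_))
    show h0.1 < x.1
    omega
  have e1 : (x.1, x.2 + 1).1 = x.1 := rfl
  have e2 : (x.1, x.2 + 1).2 = x.2 + 1 := rfl
  have hznotB : (x.1, x.2 + 1) ∉ L.take p := by
    intro hzB
    have := rows_le_last htakeP hzB
    omega
  have hzdrop : (x.1, x.2 + 1) ∈ L.drop p := by
    have ha := hzL
    rw [← List.take_append_drop p L] at ha
    rcases List.mem_append.mp ha with hb | hb
    · exact absurd hb hznotB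
    · exact hb
  have hzN : (x.1, x.2 + 1) ∈ nxt p L :=
    List.mem_filter.mpr ⟨hzdrop, decide_eq_true (by omega)⟩
  have hNp : (nxt p L).Pairwise plt := pairwise_of_suffix hmono hNsuff
  rcases head_min hNp hx hzN with h | h
  · have : x.2 = x.2 + 1 := congrArg Prod.snd h.symm
    omega
  · rcases h with h | ⟨h, h'⟩
    · omega
    · omega

/-- The geometric heart: in the rim reading order, a node weakly above the diagonal
(and, if on row `D`, strictly right of the diagonal) cannot be immediately
followed by a node strictly below row `D`. -/
lemma adj_no_drop {x y : ℕ × ℕ} (hadj : ∃ A B, rimList f = A ++ x :: y :: B)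
    (hx1 : x.1 ≤ D) (hx2 : x.1 = D → D < x.2) (hy : D < y.1) : False := by
  have hM := pairwise_rimList (f := f) hmono
  have hxM : x ∈ rimList f := by
    obtain ⟨A, B, hAB⟩ := hadj
    rw [hAB]
    simp
  have hxc := (mem_rimList hmono hfin).mp hxM
  rcases Nat.lt_or_ge x.1 D with hlt | hge
  · have h1 : x.1 + 1 < len f := by
      have := D_lt_len hmono hfin hD hDmax hp
      omega
    have hf1 : 0 < f (x.1 + 1) := by
      have := diag_lt_of_le hmono hfin hD hDmax hp (i := x.1 + 1) (by omega)
      omega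
    have hzM : (x.1 + 1, f (x.1 + 1) - 1) ∈ rimList f := by
      refine mem_rim_of hmono hfin hD hDmax hp _ _ h1 ?_ (by omega)
      have : f (x.1 + 1 + 1) ≤ f (x.1 + 1) := hmono (by omega)
      omega
    refine not_between hM hadj hzM (Or.inl (by simp)) (Or.inl ?_)
    show x.1 + 1 < y.1
    exact Nat.lt_of_le_of_lt (by omega : x.1 + 1 ≤ D) hy
  · have hxD : x.1 = D := by omega
    have hx2' := hx2 hxD
    have hzM : (D, x.2 - 1) ∈ rimList f := by
      refine mem_rim_of hmono hfin hD hDmax hp _ _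
        (D_lt_len hmono hfin hD hDmax hp) ?_ ?_
      · have := hDmax (D + 1) (by omega)
        omega
      · have : x.2 < f D := by rw [← hxD]; exact hxc.2.2
        omega
    refine not_between hM hadj hzM (Or.inr ?_) (Or.inl (by simpa using hy))
    refine ⟨by simpa using hxD, ?_⟩
    show x.2 - 1 < x.2
    omega

/-- Lemma A: if the `p`-rim contains a row-`D` node strictly left of the diagonal,
then it contains the diagonal node. -/
lemma diag_mem : ∀ (fuel : ℕ) (L : List (ℕ × ℕ)), L.length ≤ fuel → Good f L →
    ∀ j, (D, j) ∈ pRimAux p fuel L → j < D → (D, D) ∈ pRimAux p fuel L := by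
  intro fuel
  induction fuel with
  | zero =>
    intro L hlen _ j hj _
    obtain rfl : L = [] := List.length_eq_zero_iff.mp (by omega)
    simp [pRimAux_nil] at hj
  | succ fuel ih =>
    intro L hlen hG j hj hjD
    cases L with
    | nil => simp [pRimAux_nil] at hj
    | cons c T =>
      rw [pRimAux_cons p fuel hp c T] at hj ⊢
      have hL : (c :: T).Pairwise plt := good_pairwise hmono hfin hD hDmax hp hG
      rcases List.mem_append.mp hj with hB | hN
      · refine List.mem_append_left _ ?_
        have hjL : (D, j) ∈ c :: T := List.mem_of_mem_take hB
        have hc1 : c.1 ≤ D := by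
          have e1 : ((D, j) : ℕ × ℕ).1 = D := rfl
          rcases head_min hL rfl hjL with h | h
          · have : c.1 = ((D, j) : ℕ × ℕ).1 := congrArg Prod.fst h.symm
            omega
          · rcases h with h | ⟨h, _⟩ <;> omega
        have hDDM : (D, D) ∈ rimList f := diag_mem_rim hmono hfin hD hDmax hp
        have hc2 : c.2 = f c.1 - 1 := hG.hi c rfl
        have hDDL : (D, D) ∈ c :: T := by
          refine mem_good hmono hfin hD hDmax hp hG rfl hDDM ?_
          rcases Nat.lt_or_ge c.1 D with h | h
          · exact Or.inr (Or.inl h)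
          · have hcD : c.1 = D := by omega
            rcases Nat.lt_or_ge D (f D - 1) with h' | h'
            · refine Or.inr (Or.inr ⟨hcD, ?_⟩)
              show ((D, D) : ℕ × ℕ).2 < c.2
              have e2 : ((D, D) : ℕ × ℕ).2 = D := rfl
              rw [hcD] at hc2
              omega
            · left
              have hc2' : c.2 = D := by rw [hcD] at hc2; omega
              have : c = (c.1, c.2) := rfl
              rw [this, hcD, hc2']
        exact mem_take_of_plt hL hDDL hB (Or.inr (Or.inr ⟨rfl, hjD⟩))
      · refine List.mem_append_right _ ?_
        refine ih (nxt p (c :: T)) ?_ (nxt_good hmono hfin hD hDmax hp hG) j hN hjD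
        have h1 := nxt_length_le (p := p) (L := c :: T)
        simp only [List.length_cons] at hlen h1 ⊢
        omega

/-- Lemma C: the `p`-rim contains the first rim node of every row at-or-below the
head of a good list. -/
lemma rowInit_mem : ∀ (fuel : ℕ) (L : List (ℕ × ℕ)), L.length ≤ fuel → Good f L →
    ∀ (hne : L ≠ []) (i : ℕ), (L.head hne).1 ≤ i → i < len f →
    (i, f i - 1) ∈ pRimAux p fuel L := by
  intro fuel
  induction fuel with
  | zero =>
    intro L hlen _ hne
    obtain rfl : L = [] := List.length_eq_zero_iff.mp (by omega)
    simp at hne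
  | succ fuel ih =>
    intro L hlen hG hne i hge hlt
    cases L with
    | nil => simp at hne
    | cons c T =>
      rw [pRimAux_cons p fuel hp c T]
      have hL : (c :: T).Pairwise plt := good_pairwise hmono hfin hD hDmax hp hG
      have hBp : ((c :: T).take p).Pairwise plt :=
        List.Pairwise.sublist (List.take_sublist p (c :: T)) hL
      have hBne : (c :: T).take p ≠ [] := by
        obtain ⟨q, rfl⟩ : ∃ q, p = q + 1 := ⟨p - 1, by omega⟩
        simp [List.take_succ_cons]
      set y := ((c :: T).take p).getLastD (0, 0) with hydef
      have e3 : (((c :: T).take p).getLastD (0, 0)).1 = y.1 := by rw [hydef]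
      have hyB : y ∈ (c :: T).take p := getLastD_mem hBne
      have hyL : y ∈ c :: T := List.mem_of_mem_take hyB
      have hyM : y ∈ rimList f := mem_M_of_mem hmono hfin hD hDmax hp hG hyL
      have hyc := (mem_rimList hmono hfin).mp hyM
      have hc2 : c.2 = f c.1 - 1 := hG.hi c rfl
      have hge' : c.1 ≤ i := hge
      have hfi : 0 < f i := (lt_len_iff hmono hfin).mp hlt
      have hxM : (i, f i - 1) ∈ rimList f := by
        refine mem_rim_of hmono hfin hD hDmax hp _ _ hlt ?_ (by omega)
        have : f (i + 1) ≤ f i := hmono (by omega)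
        omega
      by_cases hir : i ≤ y.1
      · refine List.mem_append_left _ ?_
        have hxL : (i, f i - 1) ∈ c :: T := by
          refine mem_good hmono hfin hD hDmax hp hG rfl hxM ?_
          rcases Nat.lt_or_ge c.1 i with h | h
          · exact Or.inr (Or.inl h)
          · have hci : c.1 = i := by omega
            left
            have : c = (c.1, c.2) := rfl
            rw [this, hci, hc2, hci]
        refine mem_take_of_plt hL hxL hyB ?_
        rcases Nat.lt_or_ge i y.1 with h | h
        · exact Or.inr (Or.inl h)
        · have hiy : y.1 = i := by omega
          rcases Nat.lt_or_ge y.2 (f i - 1) with h' | h'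
          · exact Or.inr (Or.inr ⟨hiy.symm, by simpa using h'⟩)
          · left
            have hy2 : y.2 = f i - 1 := by
              have hv : y.2 < f y.1 := hyc.2.2
              rw [hiy] at hv
              omega
            have : y = (y.1, y.2) := rfl
            rw [this, hiy, hy2]
      · push_neg at hir
        have h1 : y.1 + 1 < len f := by omega
        have hzM : (y.1 + 1, f (y.1 + 1) - 1) ∈ rimList f := by
          have hf1 : 0 < f (y.1 + 1) := (lt_len_iff hmono hfin).mp h1
          refine mem_rim_of hmono hfin hD hDmax hp _ _ h1 ?_ (by omega)
          have : f (y.1 + 1 + 1) ≤ f (y.1 + 1) := hmono (by omega)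
          omega
        have e1 : ((y.1 + 1, f (y.1 + 1) - 1) : ℕ × ℕ).1 = y.1 + 1 := rfl
        have hzL : (y.1 + 1, f (y.1 + 1) - 1) ∈ c :: T := by
          refine mem_good hmono hfin hD hDmax hp hG rfl hzM (Or.inr (Or.inl ?_))
          have hcB : c ∈ (c :: T).take p := by
            refine List.mem_of_mem_head? ?_
            rw [head?_take hp]
            rfl
          have := rows_le_last hBp hcB
          omega
        have hznB : (y.1 + 1, f (y.1 + 1) - 1) ∉ (c :: T).take p := by
          intro hmem
          have h9 := rows_le_last hBp hmem
          omega
        have hzdrop : (y.1 + 1, f (y.1 + 1) - 1) ∈ (c :: T).drop p := by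
          have h' := hzL
          rw [← List.take_append_drop p (c :: T)] at h'
          rcases List.mem_append.mp h' with h'' | h''
          · exact absurd h'' hznB
          · exact h''
        have hzN : (y.1 + 1, f (y.1 + 1) - 1) ∈ nxt p (c :: T) := by
          refine List.mem_filter.mpr ⟨hzdrop, decide_eq_true (by omega)⟩
        have hNne : nxt p (c :: T) ≠ [] := List.ne_nil_of_mem hzN
        have hNG : Good f (nxt p (c :: T)) := nxt_good hmono hfin hD hDmax hp hG
        have hNp : (nxt p (c :: T)).Pairwise plt :=
          good_pairwise hmono hfin hD hDmax hp hNG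
        have hNh : ((nxt p (c :: T)).head hNne).1 ≤ i := by
          have hh : (nxt p (c :: T)).head? = some ((nxt p (c :: T)).head hNne) :=
            List.head?_eq_head hNne
          rcases head_min hNp hh hzN with h | h
          · have : ((nxt p (c :: T)).head hNne).1
                = ((y.1 + 1, f (y.1 + 1) - 1) : ℕ × ℕ).1 := congrArg Prod.fst h.symm
            omega
          · rcases h with h | ⟨h, _⟩ <;> omega
        refine List.mem_append_right _ ?_
        refine ih (nxt p (c :: T)) ?_ hNG hNne i hNh hlt
        have h1' := nxt_length_le (p := p) (L := c :: T)
        simp only [List.length_cons] at hlen h1' ⊢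
        omega

/-- Main counting lemma: if the diagonal node is not in the `p`-rim, the number of
`p`-rim nodes in rows `≤ D` is divisible by `p`. -/
lemma count_dvd (hDlen : D + 1 < len f) :
    ∀ (fuel : ℕ) (L : List (ℕ × ℕ)), L.length ≤ fuel → Good f L →
    (D, D) ∉ pRimAux p fuel L →
    p ∣ ((pRimAux p fuel L).filter (fun x => decide (x.1 ≤ D))).length := by
  intro fuel
  induction fuel with
  | zero =>
    intro L hlen _ _
    obtain rfl : L = [] := List.length_eq_zero_iff.mp (by omega)
    simp [pRimAux_nil]
  | succ fuel ih =>
    intro L hlen hG hnd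
    cases L with
    | nil => simp [pRimAux_nil]
    | cons c T =>
      rw [pRimAux_cons p fuel hp c T] at hnd ⊢
      have hL : (c :: T).Pairwise plt := good_pairwise hmono hfin hD hDmax hp hG
      have hBp : ((c :: T).take p).Pairwise plt :=
        List.Pairwise.sublist (List.take_sublist p (c :: T)) hL
      have hBne : (c :: T).take p ≠ [] := by
        obtain ⟨q, rfl⟩ : ∃ q, p = q + 1 := ⟨p - 1, by omega⟩
        simp [List.take_succ_cons]
      have hBhead : ((c :: T).take p).head? = some c := by rw [head?_take hp]; rfl
      have hndB : (D, D) ∉ (c :: T).take p := fun h => hnd (List.mem_append_left _ h)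
      have hndS : (D, D) ∉ pRimAux p fuel (nxt p (c :: T)) :=
        fun h => hnd (List.mem_append_right _ h)
      rw [List.filter_append, List.length_append]
      by_cases hall : ∀ x ∈ (c :: T).take p, x.1 ≤ D
      · by_cases hsmall : (c :: T).length ≤ p
        · exfalso
          have hDlt : D < len f := D_lt_len hmono hfin hD hDmax hp
          have hw : (len f - 1, 0) ∈ rimList f := by
            refine mem_rim_of hmono hfin hD hDmax hp _ _ (by omega) ?_ ?_
            · have hq : len f - 1 + 1 = len f := by omega
              rw [hq, f_len_eq_zero hfin]
            · exact (lt_len_iff hmono hfin).mp (by omega)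
          have hwL : (len f - 1, 0) ∈ c :: T := by
            refine mem_good hmono hfin hD hDmax hp hG rfl hw (Or.inr (Or.inl ?_))
            have hcB : c ∈ (c :: T).take p := List.mem_of_mem_head? hBhead
            have hcd := hall c hcB
            show c.1 < ((len f - 1, 0) : ℕ × ℕ).1
            have e : ((len f - 1, 0) : ℕ × ℕ).1 = len f - 1 := rfl
            omega
          have hwB : (len f - 1, 0) ∈ (c :: T).take p := by
            rw [List.take_of_length_le hsmall]
            exact hwL
          have := hall _ hwB
          have e : ((len f - 1, 0) : ℕ × ℕ).1 = len f - 1 := rfl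
          omega
        · push_neg at hsmall
          have hBlen : ((c :: T).take p).length = p := by
            rw [List.length_take]
            omega
          have hfB : ((c :: T).take p).filter (fun x => decide (x.1 ≤ D))
              = (c :: T).take p :=
            List.filter_eq_self.mpr (fun a ha => decide_eq_true (hall a ha))
          rw [hfB, hBlen]
          have hrec := ih (nxt p (c :: T))
            (by
              have h1 := nxt_length_le (p := p) (L := c :: T)
              simp only [List.length_cons] at hlen h1 ⊢
              omega)
            (nxt_good hmono hfin hD hDmax hp hG) hndS
          exact Nat.dvd_add (dvd_refl p) hrec
      · push_neg at hall
        obtain ⟨w, hwB, hwD⟩ := hall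
        have hnone : ∀ x ∈ (c :: T).take p, ¬ x.1 ≤ D := by
          by_contra hcon
          push_neg at hcon
          obtain ⟨x0, hx0B, hx0D⟩ := hcon
          -- the takeWhile / dropWhile split of the block
          have hPrc : c.1 ≤ D := by
            rcases head_min hBp hBhead hx0B with hh | hh
            · have : c.1 = x0.1 := congrArg Prod.fst hh.symm
              omega
            · rcases hh with hh | ⟨hh, _⟩ <;> omega
          have htw : ((c :: T).take p).takeWhile (fun v => decide (v.1 ≤ D)) ≠ [] := by
            have h1 : (((c :: T).take p).takeWhile (fun v => decide (v.1 ≤ D))).head?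
                = some c := by
              rw [List.head?_takeWhile, hBhead]
              simp [hPrc]
            intro hcon2
            rw [hcon2] at h1
            simp at h1
          have hdw : ((c :: T).take p).dropWhile (fun v => decide (v.1 ≤ D)) ≠ [] := by
            intro hcon2
            have h1 : ((c :: T).take p).takeWhile (fun v => decide (v.1 ≤ D))
                = (c :: T).take p := by
              have := List.takeWhile_append_dropWhile (p := fun v => decide (v.1 ≤ D))
                (l := (c :: T).take p)
              rw [hcon2] at this
              simpa using this
            have : (fun v : ℕ × ℕ => decide (v.1 ≤ D)) w = true :=
              mem_takeWhile_pred (by rw [h1]; exact hwB)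
            simp at this
            omega
          set x1 := (((c :: T).take p).takeWhile (fun v => decide (v.1 ≤ D))).getLast htw
            with hx1def
          set y1 := (((c :: T).take p).dropWhile (fun v => decide (v.1 ≤ D))).head hdw
            with hy1def
          have hx1D : x1.1 ≤ D := by
            have : (fun v : ℕ × ℕ => decide (v.1 ≤ D)) x1 = true :=
              mem_takeWhile_pred (List.getLast_mem htw)
            simpa using this
          have hy1D : D < y1.1 := by
            have := List.head_dropWhile_not (fun v : ℕ × ℕ => decide (v.1 ≤ D))
              (l := (c :: T).take p) hdw
            rw [← hy1def] at this
            simpa using this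
          -- build the adjacency in the full rim list
          have hsplitB : (c :: T).take p
              = (((c :: T).take p).takeWhile (fun v => decide (v.1 ≤ D))).dropLast
                ++ x1 :: y1
                :: (((c :: T).take p).dropWhile (fun v => decide (v.1 ≤ D))).tail := by
            conv_lhs => rw [← List.takeWhile_append_dropWhile
              (p := fun v => decide (v.1 ≤ D)) (l := (c :: T).take p)]
            rw [← List.dropLast_append_getLast htw, ← hx1def,
              ← List.cons_head_tail hdw, ← hy1def]
            simp [List.append_assoc]
          obtain ⟨pre, hpre⟩ := hG.suff
          have hadj : ∃ A B, rimList f = A ++ x1 :: y1 :: B := by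
            refine ⟨pre ++ (((c :: T).take p).takeWhile (fun v => decide (v.1 ≤ D))).dropLast,
              (((c :: T).take p).dropWhile (fun v => decide (v.1 ≤ D))).tail
                ++ (c :: T).drop p, ?_⟩
            have hM2 : rimList f = pre ++ ((c :: T).take p ++ (c :: T).drop p) := by
              rw [List.take_append_drop]
              exact hpre.symm
            rw [hM2]
            conv_lhs => rw [hsplitB]
            simp [List.append_assoc]
          refine adj_no_drop hmono hfin hD hDmax hp hadj hx1D ?_ hy1D
          intro hx1eq
          have hx1B : x1 ∈ (c :: T).take p :=
            (List.takeWhile_sublist _).subset (List.getLast_mem htw)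
          rcases Nat.lt_or_ge x1.2 D with h2 | h2
          · exfalso
            have hx1S : (D, x1.2) ∈ (c :: T).take p
                ++ pRimAux p fuel (nxt p (c :: T)) := by
              refine List.mem_append_left _ ?_
              have : x1 = (D, x1.2) := Prod.ext_iff.mpr ⟨hx1eq, rfl⟩
              rw [← this]
              exact hx1B
            have hdd := diag_mem hmono hfin hD hDmax hp (fuel + 1) (c :: T)
              hlen hG x1.2 (by rw [pRimAux_cons p fuel hp c T]; exact hx1S) h2
            rw [pRimAux_cons p fuel hp c T] at hdd
            exact hnd hdd
          · rcases Nat.lt_or_ge D x1.2 with h3 | h3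
            · exact h3
            · exfalso
              have e2 : x1.2 = D := by omega
              have : x1 = (D, D) := Prod.ext_iff.mpr ⟨hx1eq, e2⟩
              rw [this] at hx1B
              exact hndB hx1B
        have h0B : (((c :: T).take p).filter (fun x => decide (x.1 ≤ D))).length = 0 := by
          have : ((c :: T).take p).filter (fun x => decide (x.1 ≤ D)) = [] :=
            List.filter_eq_nil_iff.mpr (fun a ha => by
              have := hnone a ha
              simpa using this)
          rw [this]
          rfl
        have hrD : D < (((c :: T).take p).getLastD (0, 0)).1 := by
          have h9 := hnone _ (getLastD_mem hBne)
          omega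
        have h0S : ((pRimAux p fuel (nxt p (c :: T))).filter
            (fun x => decide (x.1 ≤ D))).length = 0 := by
          have : (pRimAux p fuel (nxt p (c :: T))).filter
              (fun x => decide (x.1 ≤ D)) = [] := by
            refine List.filter_eq_nil_iff.mpr (fun a ha => ?_)
            have haN : a ∈ nxt p (c :: T) := (pRimAux_sublist p fuel _).subset ha
            have := nxt_rows haN
            simp only [decide_eq_true_eq]
            omega
          rw [this]
          rfl
        rw [h0B, h0S]
        exact dvd_zero p

end Ctx

end ParityProof

/-- Lemma (parité): if `λ` is a self-conjugate partition and the number `a*_λ` of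
nodes of its `p`-rim* is even, then `p` divides `a*_λ`. -/
theorem dvd_aStar_of_even (p : ℕ) (hp : p.Prime) (hodd : Odd p)
    (f : ℕ → ℕ) (hf : IsPartition f) (hsc : SelfConj f)
    (h : Even (aStar p f)) : p ∣ aStar p f := by
  obtain ⟨hmono, hfin⟩ := hf
  by_cases hlen0 : len f = 0
  · have hM : rimList f = [] := by simp [rimList, hlen0]
    have hU : UList p f = [] := by simp [UList, pRimList, hM, pRimAux_nil]
    have : aStar p f = 0 := by simp [aStar, rimStar, hU]
    rw [this]
    exact dvd_zero p
  · have hl0 : 0 < len f := by omega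
    have hf0 : 0 < f 0 := (lt_len_iff hmono hfin).mp hl0
    set D := Nat.findGreatest (fun i => i < f i) (len f) with hDdef
    have hD : D < f D := by
      rw [hDdef]
      exact Nat.findGreatest_spec (P := fun i => i < f i) (m := 0) (by omega) hf0
    have hDmax : ∀ m, D < m → f m ≤ m := by
      intro m hm
      rcases le_or_gt m (len f) with hcase | hcase
      · by_contra hc
        push_neg at hc
        rw [hDdef] at hm
        exact absurd hc (Nat.findGreatest_is_greatest (P := fun i => i < f i) hm hcase)
      · have h1 : f m ≤ f (len f) := hmono (by omega)
        rw [f_len_eq_zero hfin] at h1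
        omega
    have hp1 : 1 ≤ p := hp.pos
    have hMpair : (rimList f).Pairwise plt := pairwise_rimList hmono
    have hGood : Good f (rimList f) := by
      refine ⟨List.suffix_rfl, ?_⟩
      intro x hx
      have hxM : x ∈ rimList f := List.mem_of_mem_head? hx
      have hxc := (mem_rimList hmono hfin).mp hxM
      have hzM : (x.1, f x.1 - 1) ∈ rimList f := by
        refine mem_rim_of hmono hfin hD hDmax hp1 _ _ hxc.1 ?_ (by omega)
        have : f (x.1 + 1) ≤ f x.1 := hmono (by omega)
        omega
      have e1 : ((x.1, f x.1 - 1) : ℕ × ℕ).2 = f x.1 - 1 := rfl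
      rcases head_min hMpair hx hzM with hh | hh
      · have : ((x.1, f x.1 - 1) : ℕ × ℕ).2 = x.2 := congrArg Prod.snd hh
        omega
      · rcases hh with hh | ⟨hh, hh'⟩
        · have e2 : ((x.1, f x.1 - 1) : ℕ × ℕ).1 = x.1 := rfl
          omega
        · omega
    have hSsub : List.Sublist (pRimList p f) (rimList f) := pRimAux_sublist p _ _
    have hSpair : (pRimList p f).Pairwise plt := List.Pairwise.sublist hSsub hMpair
    have hSnodup : (pRimList p f).Nodup := pairwise_nodup hSpair
    have hUnodup : (UList p f).Nodup := hSnodup.filter _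
    have hrU : rStar p f = (UList p f).length := List.toFinset_card_of_nodup hUnodup
    have hmemU : ∀ x : ℕ × ℕ, x ∈ (UList p f).toFinset ↔ x ∈ pRimList p f ∧ x.1 ≤ x.2 := by
      intro x
      rw [List.mem_toFinset]
      show x ∈ (pRimList p f).filter _ ↔ _
      rw [List.mem_filter]
      simp
    have hswap_inj : Function.Injective (fun c : ℕ × ℕ => (c.2, c.1)) := by
      intro a b hab
      have h1 : a.2 = b.2 := congrArg Prod.fst hab
      have h2 : a.1 = b.1 := congrArg Prod.snd hab
      exact Prod.ext_iff.mpr ⟨h2, h1⟩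
    have hcardB : ((UList p f).toFinset.image fun c : ℕ × ℕ => (c.2, c.1)).card
        = (UList p f).toFinset.card := Finset.card_image_of_injective _ hswap_inj
    have hsub_inter : (UList p f).toFinset ∩
        ((UList p f).toFinset.image fun c : ℕ × ℕ => (c.2, c.1)) ⊆ {(D, D)} := by
      intro x hx
      obtain ⟨hxA, hxB⟩ := Finset.mem_inter.mp hx
      obtain ⟨y, hyA, hyx⟩ := Finset.mem_image.mp hxB
      have h1 := (hmemU x).mp hxA
      have h2 := (hmemU y).mp hyA
      have hy2 : y.2 = x.1 := congrArg Prod.fst hyx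
      have hy1 : y.1 = x.2 := congrArg Prod.snd hyx
      have hxx : x.1 = x.2 := by omega
      have hxM : x ∈ rimList f := hSsub.subset h1.1
      have hxc := (mem_rimList hmono hfin).mp hxM
      have hxle : x.1 ≤ D := by
        by_contra hc
        have := hDmax x.1 (by omega)
        omega
      have hxD : x.1 = D := by
        rcases Nat.lt_or_ge x.1 D with hlt | hge
        · exfalso
          have hd1 : x.1 + 1 < f (x.1 + 1) := diag_lt_of_le hmono hfin hD hDmax hp1 (by omega)
          omega
        · omega
      rw [Finset.mem_singleton]
      exact Prod.ext_iff.mpr ⟨hxD, by omega⟩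
    have hkey : aStar p f + ((UList p f).toFinset ∩
        ((UList p f).toFinset.image fun c : ℕ × ℕ => (c.2, c.1))).card
        = 2 * rStar p f := by
      have hcu := Finset.card_union_add_card_inter (UList p f).toFinset
        ((UList p f).toFinset.image fun c : ℕ × ℕ => (c.2, c.1))
      have ha : aStar p f = ((UList p f).toFinset ∪
          ((UList p f).toFinset.image fun c : ℕ × ℕ => (c.2, c.1))).card := rfl
      have hr : rStar p f = (UList p f).toFinset.card := rfl
      rw [ha, hr]
      omega
    have hintcard : ((UList p f).toFinset ∩
        ((UList p f).toFinset.image fun c : ℕ × ℕ => (c.2, c.1))).card ≤ 1 := by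
      have := Finset.card_le_card hsub_inter
      simpa using this
    obtain ⟨k, hk⟩ := h
    have hint0 : ((UList p f).toFinset ∩
        ((UList p f).toFinset.image fun c : ℕ × ℕ => (c.2, c.1))).card = 0 := by
      omega
    have hDDnotS : (D, D) ∉ pRimList p f := by
      intro hmem
      have hA : ((D, D) : ℕ × ℕ) ∈ (UList p f).toFinset :=
        (hmemU _).mpr ⟨hmem, le_refl D⟩
      have hB : ((D, D) : ℕ × ℕ) ∈ (UList p f).toFinset.image
          (fun c : ℕ × ℕ => (c.2, c.1)) := Finset.mem_image.mpr ⟨(D, D), hA, rfl⟩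
      have : ((D, D) : ℕ × ℕ) ∈ (UList p f).toFinset ∩
          ((UList p f).toFinset.image fun c : ℕ × ℕ => (c.2, c.1)) :=
        Finset.mem_inter.mpr ⟨hA, hB⟩
      have := Finset.card_pos.mpr ⟨_, this⟩
      omega
    have hf0len : f 0 = len f := by
      have h1 : conj f 0 = f 0 := congrFun hsc 0
      rw [← h1]
      show Nat.card {i | 0 < f i} = len f
      have hset : {i | 0 < f i} = Set.Iio (len f) := by
        ext i
        exact (lt_len_iff hmono hfin).symm
      rw [hset, Nat.card_eq_fintype_card]
      simp
    have hDlen : D + 1 < len f := by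
      by_contra hcon
      push_neg at hcon
      have hDlt : D < len f := D_lt_len hmono hfin hD hDmax hp1
      have hfD : f D = len f := by
        have h1 : f D ≤ f 0 := hmono (by omega)
        omega
      have hMne : rimList f ≠ [] :=
        List.ne_nil_of_mem (diag_mem_rim hmono hfin hD hDmax hp1)
      have hhead : ((rimList f).head hMne).1 ≤ D := by
        have hh : (rimList f).head? = some ((rimList f).head hMne) :=
          List.head?_eq_head hMne
        have e1 : ((D, D) : ℕ × ℕ).1 = D := rfl
        rcases head_min hMpair hh (diag_mem_rim hmono hfin hD hDmax hp1) with hh' | hh'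
        · have : ((rimList f).head hMne).1 = ((D, D) : ℕ × ℕ).1 :=
            congrArg Prod.fst hh'.symm
          omega
        · rcases hh' with hh' | ⟨hh', _⟩ <;> omega
      have hmem : (D, f D - 1) ∈ pRimList p f :=
        rowInit_mem hmono hfin hD hDmax hp1 _ _ (le_refl _) hGood hMne D hhead hDlt
      rw [show f D - 1 = D by omega] at hmem
      exact hDDnotS hmem
    have hfe : UList p f = (pRimList p f).filter (fun x => decide (x.1 ≤ D)) := by
      show (pRimList p f).filter _ = _
      refine List.filter_congr ?_
      intro x hxS
      have hxM : x ∈ rimList f := hSsub.subset hxS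
      have hxc := (mem_rimList hmono hfin).mp hxM
      rw [decide_eq_decide]
      rcases Nat.lt_trichotomy x.1 D with hlt | heq | hgt
      · have hd1 : x.1 + 1 < f (x.1 + 1) := diag_lt_of_le hmono hfin hD hDmax hp1 (by omega)
        constructor
        · intro _; omega
        · intro _; omega
      · constructor
        · intro _; omega
        · intro _
          rcases Nat.lt_or_ge x.2 x.1 with h2 | h2
          · exfalso
            have hxpair : x = (D, x.2) := Prod.ext_iff.mpr ⟨heq, rfl⟩
            have hdd := diag_mem hmono hfin hD hDmax hp1 (rimList f).length (rimList f)
              (le_refl _) hGood x.2 (by rw [← hxpair]; exact hxS) (by omega)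
            exact hDDnotS hdd
          · omega
      · have h1 := hDmax x.1 (by omega)
        constructor
        · intro h2; omega
        · intro h2; omega
    have hcount : p ∣ (UList p f).length := by
      rw [hfe]
      exact count_dvd hmono hfin hD hDmax hp1 hDlen _ _ (le_refl _) hGood hDDnotS
    have hfin2 : aStar p f = 2 * (UList p f).length := by omega
    rw [hfin2]
    exact Dvd.dvd.mul_left hcount 2

end Mull
end

section
/- Let p be an odd prime and λ = (λ_1, λ_2, …, λ_r) a BG-partition. Let k = max{i : λ_i ≥ i}. Then the partition μ = (λ_1, λ_2, …, λ_k) is p-regular. -/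
namespace Mull

theorem exists_lt_add_two_mul_modEq {p : ℕ} (hp : Odd p) (a b : ℕ) :
    ∃ r < p, a + 2 * r ≡ b [MOD p] := by
  have : NeZero p := ⟨hp.pos.ne'⟩
  let two : (ZMod p)ˣ := ZMod.unitOfCoprime 2 (Nat.coprime_two_left.mpr hp)
  let c : ZMod p := ((b : ZMod p) - a) * ↑two⁻¹
  refine ⟨c.val, c.val_lt, ?_⟩
  rw [← ZMod.natCast_eq_natCast_iff]
  have htwo : ((2 : ℕ) : ZMod p) * ↑two⁻¹ = 1 := two.mul_inv
  push_cast [ZMod.natCast_val, ZMod.cast_id]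
  linear_combination ((b : ZMod p) - a) * htwo

lemma lt_of_lt_kDiag {f : ℕ → ℕ} (hf : Antitone f) {j : ℕ} (hj : j < kDiag f) :
    j < f j := by
  by_contra! hle
  have hsub : {i | i < f i} ⊆ Set.Iio j := fun i (hi : i < f i) => by
    rw [Set.mem_Iio]
    by_contra! hji
    have : f i ≤ f j := hf hji
    omega
  have hcard : kDiag f ≤ j := by
    simpa [kDiag] using Nat.card_mono (Set.finite_Iio j) hsub
  omega

lemma hook_diag_add (f : ℕ → ℕ) (hsc : SelfConj f) {j : ℕ} (hj : j < f j) :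
    hook f j j + (2 * j + 1) = 2 * f j := by
  unfold hook
  rw [hsc]
  omega

/-- Along `p` equal diagonal rows the diagonal hook lengths `2m - 2j - 1` run through
all residues modulo the odd number `p`. -/
lemma exists_dvd_hook_of_rows_eq {p : ℕ} (hp : Odd p) {f : ℕ → ℕ} (hf : Antitone f)
    (hsc : SelfConj f) {i : ℕ} (hdiag : i + (p - 1) < f (i + (p - 1)))
    (heq : f i = f (i + (p - 1))) : ∃ j, j < f j ∧ p ∣ hook f j j := by
  obtain ⟨r, hrp, hr⟩ := exists_lt_add_two_mul_modEq hp (2 * i + 1) (2 * f i)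
  have hle : i + r ≤ i + (p - 1) := by omega
  have hrow : f (i + r) = f i := le_antisymm (hf (by omega)) (heq ▸ hf hle)
  have hj : i + r < f (i + r) := lt_of_le_of_lt hle (lt_of_lt_of_le hdiag (hf hle))
  refine ⟨i + r, hj, (Nat.modEq_zero_iff_dvd).mp ?_⟩
  have hhook := hook_diag_add f hsc hj
  rw [hrow] at hhook
  refine Nat.ModEq.add_right_cancel' (2 * i + 1 + 2 * r) ?_
  calc hook f (i + r) (i + r) + (2 * i + 1 + 2 * r) = 2 * f i := by omega
    _ ≡ 2 * i + 1 + 2 * r [MOD p] := hr.symm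
    _ = 0 + (2 * i + 1 + 2 * r) := (zero_add _).symm

theorem truncated_bg_is_regular_general (p : ℕ) (hodd : Odd p)
    (f : ℕ → ℕ) (hf : IsBG p f) :
    IsRegular p (fun i => if i < kDiag f then f i else 0) := by
  obtain ⟨⟨hanti, -⟩, hsc, hdiag⟩ := hf
  intro i hne heq
  have hk : i + (p - 1) < kDiag f := by
    by_contra h
    simp only [h, if_false] at hne
    exact hne rfl
  simp only [if_pos hk, if_pos (lt_of_le_of_lt (Nat.le_add_right i _) hk)] at heq
  obtain ⟨j, hj, hdvd⟩ :=
    exists_dvd_hook_of_rows_eq hodd hanti hsc (lt_of_lt_kDiag hanti hk) heq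
  exact hdiag j hj hdvd

/-- Lemma: truncating a BG-partition `λ` to its first `k` rows, where
`k = max {i : λ_i ≥ i}` is the number of diagonal nodes, yields a `p`-regular
partition. -/
theorem truncated_bg_is_regular (p : ℕ) (hp : p.Prime) (hodd : Odd p)
    (f : ℕ → ℕ) (hf : IsBG p f) :
    IsRegular p (fun i => if i < kDiag f then f i else 0) :=
  truncated_bg_is_regular_general p hodd f hf

end Mull
end

section
/- Let p be an odd prime and λ a self-conjugate partition. Then the set of nodes [λ] \ Rim*_p(λ), obtained by removing the p-rim* of λ from its Young diagram, is the Young diagram of a partition, and this partition is again self-conjugate. -/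
namespace Mull

/-! ### Auxiliary material for the proof -/

/-- Strict lexicographic order on nodes: row ascending, column descending. -/
def lexLt (a b : ℕ × ℕ) : Prop := a.1 < b.1 ∨ (a.1 = b.1 ∧ b.2 < a.2)

theorem pRimAux_subset (p : ℕ) : ∀ (fuel : ℕ) (L : List (ℕ × ℕ)),
    ∀ x ∈ pRimAux p fuel L, x ∈ L := by
  intro fuel
  induction fuel with
  | zero => intro L x hx; simp [pRimAux] at hx
  | succ fuel ih =>
    intro L x hx
    match L with
    | [] => simp [pRimAux] at hx
    | c :: L' =>
      rw [pRimAux] at hx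
      rcases List.mem_append.1 hx with h | h
      · exact List.mem_of_mem_take h
      · have := ih _ _ h
        have := List.mem_of_mem_filter this
        exact List.mem_of_mem_drop this

theorem mem_le_getLast {T : List (ℕ × ℕ)} (hT : T.Pairwise lexLt) (hne : T ≠ [])
    {a : ℕ × ℕ} (ha : a ∈ T) : a = T.getLast hne ∨ lexLt a (T.getLast hne) := by
  have hsplit := List.dropLast_append_getLast hne
  rw [← hsplit] at hT ha
  rcases List.mem_append.1 ha with h | h
  · right
    rcases List.pairwise_append.1 hT with ⟨_, _, hcross⟩
    exact hcross a h _ (List.mem_singleton_self _)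
  · left; exact List.mem_singleton.1 h

theorem getLastD_mem_s13 {T : List (ℕ × ℕ)} (hne : T ≠ []) (c : ℕ × ℕ) :
    T.getLastD c = T.getLast hne := by
  match T with
  | [] => exact absurd rfl hne
  | a :: T' => simp [List.getLastD_eq_getLast?, List.getLast?_eq_getLast]

theorem pRimAux_mem_maxcol (p : ℕ) (hp : 1 ≤ p) : ∀ (fuel : ℕ) (L : List (ℕ × ℕ)),
    L.Pairwise lexLt → L.length ≤ fuel →
    ∀ y ∈ L, (∀ z ∈ L, z.1 = y.1 → z.2 ≤ y.2) → y ∈ pRimAux p fuel L := by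
  intro fuel
  induction fuel with
  | zero =>
    intro L hpw hlen y hy _
    rw [Nat.le_zero, List.length_eq_zero_iff] at hlen
    subst hlen; simp at hy
  | succ fuel ih =>
    intro L hpw hlen y hy hmax
    match L with
    | [] => simp at hy
    | c :: L' =>
      rw [pRimAux]
      set T := (c :: L').take p with hTdef
      set D := (c :: L').drop p with hDdef
      have hTD : T ++ D = c :: L' := List.take_append_drop p (c :: L')
      have hTne : T ≠ [] := by
        have : T.length = min p (c :: L').length := by rw [hTdef, List.length_take]
        intro h; rw [h] at this; simp at this; omega
      have hpwTD : (T ++ D).Pairwise lexLt := by rw [hTD]; exact hpw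
      rcases List.pairwise_append.1 hpwTD with ⟨hpwT, hpwD, hcross⟩
      have ht : T.getLastD c = T.getLast hTne := getLastD_mem_s13 hTne c
      have htmem : T.getLast hTne ∈ T := List.getLast_mem hTne
      rcases List.mem_append.1 (hTD ▸ hy) with hyT | hyD
      · exact List.mem_append.2 (Or.inl hyT)
      · -- y is in the dropped part; show its row is > R and recurse
        have hR : (T.getLastD c).1 < y.1 := by
          rw [ht]
          rcases hcross _ htmem _ hyD with h | ⟨heq, hlt⟩
          · exact h
          · exfalso
            have := hmax _ (hTD ▸ List.mem_append.2 (Or.inl htmem)) heq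
            omega
        have hyF : y ∈ D.filter (fun d => decide ((T.getLastD c).1 < d.1)) := by
          rw [List.mem_filter]; exact ⟨hyD, by simpa using hR⟩
        have hpwF : (D.filter (fun d => decide ((T.getLastD c).1 < d.1))).Pairwise lexLt :=
          hpwD.sublist List.filter_sublist
        have hlenF : (D.filter (fun d => decide ((T.getLastD c).1 < d.1))).length ≤ fuel := by
          have h1 := List.length_filter_le (fun d => decide ((T.getLastD c).1 < d.1)) D
          have h2 : D.length = (c :: L').length - p := by rw [hDdef, List.length_drop]
          have h3 : (c :: L').length ≤ fuel + 1 := hlen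
          have h4 : 1 ≤ (c :: L').length := by simp
          omega
        have hmaxF : ∀ z ∈ D.filter (fun d => decide ((T.getLastD c).1 < d.1)),
            z.1 = y.1 → z.2 ≤ y.2 := by
          intro z hz hz1
          have : z ∈ D := List.mem_of_mem_filter hz
          exact hmax _ (hTD ▸ List.mem_append.2 (Or.inr this)) hz1
        exact List.mem_append.2 (Or.inr (ih _ hpwF hlenF y hyF hmaxF))

theorem pRimAux_mem_row (p : ℕ) : ∀ (fuel : ℕ) (L : List (ℕ × ℕ)),
    L.Pairwise lexLt →
    ∀ x ∈ pRimAux p fuel L, ∀ y ∈ L, y.1 = x.1 → x.2 < y.2 → y ∈ pRimAux p fuel L := by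
  intro fuel
  induction fuel with
  | zero => intro L _ x hx; simp [pRimAux] at hx
  | succ fuel ih =>
    intro L hpw x hx y hy hrow hcol
    match L with
    | [] => simp at hy
    | c :: L' =>
      rw [pRimAux] at hx ⊢
      set T := (c :: L').take p with hTdef
      set D := (c :: L').drop p with hDdef
      have hTD : T ++ D = c :: L' := List.take_append_drop p (c :: L')
      have hpwTD : (T ++ D).Pairwise lexLt := by rw [hTD]; exact hpw
      rcases List.pairwise_append.1 hpwTD with ⟨hpwT, hpwD, hcross⟩
      rcases List.mem_append.1 hx with hxT | hxR
      · -- x in the taken part, show y also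
        rcases List.mem_append.1 (hTD ▸ hy) with hyT | hyD
        · exact List.mem_append.2 (Or.inl hyT)
        · exfalso
          rcases hcross _ hxT _ hyD with h | ⟨heq, hlt⟩
          · omega
          · omega
      · -- x in the recursive part
        set F := D.filter (fun d => decide ((T.getLastD c).1 < d.1)) with hFdef
        have hxF : x ∈ F := pRimAux_subset p fuel F x hxR
        have hxrow : (T.getLastD c).1 < x.1 := by
          have := (List.mem_filter.1 hxF).2
          simpa using this
        have hyD : y ∈ D := by
          rcases List.mem_append.1 (hTD ▸ hy) with hyT | hyD
          · exfalso
            have hTne : T ≠ [] := List.ne_nil_of_mem hyT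
            have ht : T.getLastD c = T.getLast hTne := getLastD_mem_s13 hTne c
            rcases mem_le_getLast hpwT hTne hyT with h | h
            · rw [← h] at ht; rw [ht] at hxrow; omega
            · rcases h with h | ⟨h1, h2⟩ <;> rw [ht] at hxrow <;> omega
          · exact hyD
        have hyF : y ∈ F := by
          rw [hFdef, List.mem_filter]
          exact ⟨hyD, by rw [decide_eq_true_eq]; omega⟩
        have hpwF : F.Pairwise lexLt := hpwD.sublist List.filter_sublist
        exact List.mem_append.2 (Or.inr (ih F hpwF x hxR y hyF hrow hcol))

theorem len_pos_iff {f : ℕ → ℕ} (hf : IsPartition f) {r : ℕ} :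
    r < len f ↔ f r ≠ 0 := by
  obtain ⟨hanti, N, hN⟩ := hf
  have hne : {N | f N = 0}.Nonempty := ⟨N, hN⟩
  constructor
  · intro h hr
    have h2 : len f ≤ r := Nat.sInf_le hr
    omega
  · intro h
    by_contra hlt
    push_neg at hlt
    have : f (len f) = 0 := Nat.sInf_mem hne
    have := hanti hlt
    omega

theorem mem_rimList_s13 {f : ℕ → ℕ} {r c : ℕ} :
    (r, c) ∈ rimList f ↔ r < len f ∧ c < f r ∧ f (r + 1) ≤ c + 1 := by
  unfold rimList
  simp only [List.mem_flatMap, List.mem_range, List.mem_map, Prod.mk.injEq]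
  constructor
  · rintro ⟨i, hi, k, hk, rfl, rfl⟩
    refine ⟨hi, ?_, ?_⟩ <;> omega
  · rintro ⟨hr, hc, hrim⟩
    exact ⟨r, hr, f r - 1 - c, by omega, rfl, by omega⟩

theorem rimList_pairwise (f : ℕ → ℕ) : (rimList f).Pairwise lexLt := by
  unfold rimList
  rw [List.pairwise_flatMap]
  constructor
  · intro a _
    rw [List.pairwise_map]
    have : List.Pairwise (fun x1 x2 => x1 < x2) (List.range (f a - (f (a + 1) - 1))) :=
      List.pairwise_lt_range
    refine this.imp_of_mem ?_
    intro k1 k2 h1 h2 hlt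
    right
    refine ⟨rfl, ?_⟩
    simp only [List.mem_range] at h1 h2
    omega
  · have : List.Pairwise (fun x1 x2 => x1 < x2) (List.range (len f)) := List.pairwise_lt_range
    refine this.imp ?_
    intro i1 i2 hlt
    intro x hx y hy
    simp only [List.mem_map, List.mem_range] at hx hy
    obtain ⟨k1, _, rfl⟩ := hx
    obtain ⟨k2, _, rfl⟩ := hy
    left; exact hlt

theorem mem_pRimList_rim {p : ℕ} {f : ℕ → ℕ} {x : ℕ × ℕ}
    (hx : x ∈ pRimList p f) : x ∈ rimList f :=
  pRimAux_subset p _ _ x hx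

theorem rightmost_mem_pRimList {p : ℕ} (hp : 1 ≤ p) {f : ℕ → ℕ} (hf : IsPartition f)
    {r : ℕ} (hr : r < len f) : (r, f r - 1) ∈ pRimList p f := by
  have hfr : f r ≠ 0 := (len_pos_iff hf).1 hr
  have hmem : (r, f r - 1) ∈ rimList f := by
    rw [mem_rimList_s13]
    exact ⟨hr, by omega, by
      have : f (r + 1) ≤ f r := hf.1 (by omega)
      omega⟩
  refine pRimAux_mem_maxcol p hp _ _ (rimList_pairwise f) le_rfl _ hmem ?_
  rintro ⟨r', c'⟩ hz hz1
  simp only at hz1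
  subst hz1
  have := mem_rimList_s13.1 hz
  simp only
  omega

theorem up_mem_pRimList {p : ℕ} {f : ℕ → ℕ} {r c c2 : ℕ}
    (hx : (r, c) ∈ pRimList p f) (h1 : c < c2) (h2 : c2 < f r) :
    (r, c2) ∈ pRimList p f := by
  have hrim := mem_pRimList_rim hx
  rw [mem_rimList_s13] at hrim
  have hmem : (r, c2) ∈ rimList f := by
    rw [mem_rimList_s13]
    exact ⟨hrim.1, h2, by omega⟩
  exact pRimAux_mem_row p _ _ (rimList_pairwise f) _ hx _ hmem rfl h1

theorem mem_rimStar_iff {p : ℕ} {f : ℕ → ℕ} {i j : ℕ} :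
    (i, j) ∈ rimStar p f ↔
      (i ≤ j ∧ (i, j) ∈ pRimList p f) ∨ (j ≤ i ∧ (j, i) ∈ pRimList p f) := by
  unfold rimStar UList
  simp only [Finset.mem_union, List.mem_toFinset, Finset.mem_image, List.mem_filter,
    decide_eq_true_eq, Prod.mk.injEq]
  constructor
  · rintro (⟨h1, h2⟩ | ⟨⟨a, b⟩, ⟨h1, h2⟩, h3, h4⟩)
    · exact Or.inl ⟨h2, h1⟩
    · simp only at h3 h4
      subst h3; subst h4
      exact Or.inr ⟨h2, h1⟩
  · rintro (⟨h1, h2⟩ | ⟨h1, h2⟩)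
    · exact Or.inl ⟨h2, h1⟩
    · exact Or.inr ⟨(j, i), ⟨h2, h1⟩, rfl, rfl⟩

theorem lt_sInf_iff_of_upclosed {B : Set ℕ} (hne : B.Nonempty)
    (hup : ∀ j ∈ B, j + 1 ∈ B) (j : ℕ) : j < sInf B ↔ j ∉ B := by
  constructor
  · intro h hj
    exact absurd (Nat.sInf_le hj) (by omega)
  · intro hj
    have hiter : ∀ b ∈ B, ∀ m, b ≤ m → m ∈ B := by
      intro b hb m hm
      induction m, hm using Nat.le_induction with
      | base => exact hb
      | succ n _ ih => exact hup n ih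
    have hmem : sInf B ∈ B := Nat.sInf_mem hne
    by_contra h
    push_neg at h
    exact hj (hiter _ hmem _ h)

theorem lt_conj_iff {f : ℕ → ℕ} (hf : IsPartition f) (i j : ℕ) :
    i < conj f j ↔ j < f i := by
  obtain ⟨hanti, N, hN⟩ := hf
  have hne : {i | f i ≤ j}.Nonempty := ⟨N, by simp [hN]⟩
  set m := sInf {i | f i ≤ j} with hm
  have hset : {i | j < f i} = Set.Iio m := by
    ext i
    simp only [Set.mem_setOf_eq, Set.mem_Iio]
    constructor
    · intro h
      by_contra hle
      push_neg at hle
      have h1 : f m ≤ j := Nat.sInf_mem hne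
      have h2 : f i ≤ f m := hanti hle
      omega
    · intro h
      have := Nat.notMem_of_lt_sInf (by rw [← hm]; exact h)
      simp only [Set.mem_setOf_eq] at this
      omega
  have hconj : conj f j = m := by
    rw [conj, hset]
    have : (Set.Iio m) = ↑(Finset.range m) := by ext x; simp
    rw [this]
    simp [Nat.card_eq_card_toFinset]
  rw [hconj, ← Set.mem_Iio, ← hset]
  simp

/-- Remark: for a self-conjugate partition `λ`, the set of nodes `[λ] \ Rim*_p(λ)`
is the Young diagram of a partition, and this partition is again self-conjugate. -/
theorem diagram_minus_rimStar_selfConj (p : ℕ) (hp : p.Prime) (hodd : Odd p)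
    (f : ℕ → ℕ) (hf : IsPartition f) (hsc : SelfConj f) :
    ∃ g : ℕ → ℕ, IsPartition g ∧ SelfConj g ∧
      ∀ i j : ℕ, j < g i ↔ (j < f i ∧ (i, j) ∉ rimStar p f) := by
  classical
  have hp1 : 1 ≤ p := hp.one_le
  obtain ⟨hanti, N, hN⟩ := hf
  have hf' : IsPartition f := ⟨hanti, N, hN⟩
  have hsym : ∀ i j : ℕ, j < f i ↔ i < f j := by
    intro i j
    rw [← lt_conj_iff hf' i j, hsc]
  have hRSsym : ∀ i j : ℕ, (i, j) ∈ rimStar p f ↔ (j, i) ∈ rimStar p f := by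
    intro i j; rw [mem_rimStar_iff, mem_rimStar_iff]; tauto
  have hup : ∀ i j : ℕ, (i, j) ∈ rimStar p f → j + 1 < f i → (i, j + 1) ∈ rimStar p f := by
    intro i j hmem hlt
    rw [mem_rimStar_iff] at hmem ⊢
    rcases hmem with ⟨hij, hpr⟩ | ⟨hji, hpr⟩
    · exact Or.inl ⟨by omega, up_mem_pRimList hpr (by omega) hlt⟩
    · rcases Nat.eq_or_lt_of_le hji with heq | hlt'
      · subst heq
        exact Or.inl ⟨by omega, up_mem_pRimList hpr (by omega) hlt⟩
      · right
        refine ⟨by omega, ?_⟩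
        have hrim := mem_pRimList_rim hpr
        rw [mem_rimList_s13] at hrim
        have h2 : i < f (j + 1) := (hsym i (j + 1)).1 hlt
        have h3 : f (j + 1) = i + 1 := by omega
        have h4 : j + 1 < len f := (len_pos_iff hf').2 (by omega)
        have h5 := rightmost_mem_pRimList hp1 hf' h4
        rw [h3] at h5
        simpa using h5
  set B : ℕ → Set ℕ := fun i => {j | f i ≤ j ∨ (i, j) ∈ rimStar p f} with hB
  have hBne : ∀ i, (B i).Nonempty := fun i => ⟨f i, Or.inl le_rfl⟩
  have hBup : ∀ i, ∀ j ∈ B i, j + 1 ∈ B i := by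
    intro i j hj
    rcases hj with h | h
    · exact Or.inl (by omega)
    · by_cases hlt : j + 1 < f i
      · exact Or.inr (hup i j h hlt)
      · exact Or.inl (by omega)
  set g : ℕ → ℕ := fun i => sInf (B i) with hg
  have hchar : ∀ i j : ℕ, j < g i ↔ (j < f i ∧ (i, j) ∉ rimStar p f) := by
    intro i j
    rw [hg]
    simp only
    rw [lt_sInf_iff_of_upclosed (hBne i) (hBup i) j]
    simp only [hB, Set.mem_setOf_eq, not_or, Nat.not_le]
  have hmono : ∀ i, g (i + 1) ≤ g i := by
    intro i
    by_contra h
    push_neg at h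
    have h1 := (hchar (i + 1) (g i)).1 h
    have h2 : g i < g i := by
      rw [hchar]
      refine ⟨lt_of_lt_of_le h1.1 (hanti (by omega)), ?_⟩
      intro hmem
      have hm2 := (hRSsym _ _).1 hmem
      have hlt2 : i + 1 < f (g i) := (hsym (i + 1) (g i)).1 h1.1
      have hm3 := hup _ _ hm2 hlt2
      exact h1.2 ((hRSsym _ _).1 hm3)
    omega
  have hgN : g N = 0 := by
    by_contra h
    have h1 := ((hchar N 0).1 (by omega)).1
    omega
  have hscg : SelfConj g := by
    funext j
    show Nat.card {i | j < g i} = g j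
    have hset : {i | j < g i} = Set.Iio (g j) := by
      ext i
      simp only [Set.mem_setOf_eq, Set.mem_Iio]
      rw [hchar, hchar, hsym i j, hRSsym i j]
    rw [hset]
    have h2 : (Set.Iio (g j)) = ↑(Finset.range (g j)) := by ext x; simp
    rw [h2]
    simp [Nat.card_eq_card_toFinset]
  exact ⟨g, ⟨antitone_nat_of_succ_le hmono, N, hgN⟩, hscg, hchar⟩

end Mull
end
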